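/- Let P be a finite set of points in ℝ² with diameter D > 0 attained by points p₁, p₂ ∈ P, let u = (p₁ − p₂)/D, let z = w_{u⊥}(P)/D, and let c ≥ 0 be a real constant. If β is a unit vector whose angle with the orientation of u, namely arccos(|⟨β, u⟩|), is at most (2c + 2)·arcsin(z), then w_β(P) · w_{β⊥}(P) ≤ (4c + 6) · inf over all unit vectors γ of ( w_γ(P) · w_{γ⊥}(P) ). -/

import Mathlib

open Real
open scoped RealInnerProductSpace

noncomputable section

/-- The point of `ℝ²` with coordinates `a`, `b`. -/
def pt (a b : ℝ) : EuclideanSpace ℝ (Fin 2) :=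
  (WithLp.equiv 2 (Fin 2 → ℝ)).symm ![a, b]

/-- `v` rotated counterclockwise by `π/2`. -/
def perp (v : EuclideanSpace ℝ (Fin 2)) : EuclideanSpace ℝ (Fin 2) :=
  pt (-(v 1)) (v 0)

/-- The extent of a point set `P` along a vector `v`: `max_{p,q ∈ P} ⟨p − q, v⟩`. -/
def wext (v : EuclideanSpace ℝ (Fin 2)) (P : Set (EuclideanSpace ℝ (Fin 2))) : ℝ :=
  sSup {x : ℝ | ∃ p ∈ P, ∃ q ∈ P, x = ⟪p - q, v⟫}

/-! Let `u` be the unit vector along a diametral pair `p₁, p₂`, with `D = ‖p₁ - p₂‖`, and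
`z D = w_{u⊥}`. Every bounding box contains the segment `p₁p₂`, so in any orthonormal frame
`γ, γ⊥` we have `w_γ ≥ D |⟨u, γ⟩|` and `w_{γ⊥} ≥ D |⟨u, γ⊥⟩|`; writing `u⊥` in that frame gives
`z D ≤ |⟨u, γ⊥⟩| w_γ + |⟨u, γ⟩| w_{γ⊥} ≤ 2 w_γ w_{γ⊥} / D`, i.e. the optimal box has area at least
`z D² / 2`. On the other side, `w_β ≤ D`, and writing `β⊥` in the frame `u, u⊥` gives
`w_{β⊥} ≤ |sin θ| D + z D`, where `θ` is the angle between `β` and `u`. By concavity of `sin` and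
Jordan's inequality, `θ ≤ (2c+2) arcsin z` forces `sin θ ≤ (2c+2) z`, so the `β`-box has area at
most `(2c+3) z D²`. -/

section Plane

lemma inner_eq_add_mul_coords (x y : EuclideanSpace ℝ (Fin 2)) : ⟪x, y⟫ = x 0 * y 0 + x 1 * y 1 := by
  simp [PiLp.inner_apply, Fin.sum_univ_two, mul_comm]

lemma perp_apply_zero (v : EuclideanSpace ℝ (Fin 2)) : perp v 0 = -(v 1) := rfl

lemma perp_apply_one (v : EuclideanSpace ℝ (Fin 2)) : perp v 1 = v 0 := rfl

lemma inner_perp_perp (a b : EuclideanSpace ℝ (Fin 2)) : ⟪perp a, perp b⟫ = ⟪a, b⟫ := by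
  simp only [inner_eq_add_mul_coords, perp_apply_zero, perp_apply_one]; ring

lemma inner_perp_left (a b : EuclideanSpace ℝ (Fin 2)) : ⟪perp a, b⟫ = -⟪a, perp b⟫ := by
  simp only [inner_eq_add_mul_coords, perp_apply_zero, perp_apply_one]; ring

lemma norm_perp (v : EuclideanSpace ℝ (Fin 2)) : ‖perp v‖ = ‖v‖ := by
  rw [norm_eq_sqrt_real_inner, norm_eq_sqrt_real_inner, inner_perp_perp]

lemma inner_eq_inner_add_inner_perp {γ : EuclideanSpace ℝ (Fin 2)} (hγ : ‖γ‖ = 1)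
    (m n : EuclideanSpace ℝ (Fin 2)) :
    ⟪m, n⟫ = ⟪n, γ⟫ * ⟪m, γ⟫ + ⟪n, perp γ⟫ * ⟪m, perp γ⟫ := by
  have h : γ 0 ^ 2 + γ 1 ^ 2 = 1 := by
    have := real_inner_self_eq_norm_sq γ
    rw [inner_eq_add_mul_coords, hγ] at this
    linarith
  simp only [inner_eq_add_mul_coords, perp_apply_zero, perp_apply_one]
  linear_combination (-(m 0 * n 0 + m 1 * n 1)) * h

lemma inner_sq_add_inner_perp_sq {γ : EuclideanSpace ℝ (Fin 2)} (hγ : ‖γ‖ = 1)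
    (v : EuclideanSpace ℝ (Fin 2)) : ⟪v, γ⟫ ^ 2 + ⟪v, perp γ⟫ ^ 2 = ‖v‖ ^ 2 := by
  rw [← real_inner_self_eq_norm_sq, inner_eq_inner_add_inner_perp hγ v v]; ring

end Plane

section Extent

variable {P : Set (EuclideanSpace ℝ (Fin 2))} {p q : EuclideanSpace ℝ (Fin 2)}

lemma bddAbove_wext_set (hfin : P.Finite) (v : EuclideanSpace ℝ (Fin 2)) :
    BddAbove {x : ℝ | ∃ p ∈ P, ∃ q ∈ P, x = ⟪p - q, v⟫} := by
  refine ((hfin.prod hfin).image fun pq ↦ ⟪pq.1 - pq.2, v⟫).bddAbove.mono ?_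
  rintro x ⟨p, hp, q, hq, rfl⟩
  exact ⟨(p, q), ⟨hp, hq⟩, rfl⟩

lemma inner_sub_le_wext (hfin : P.Finite) (hp : p ∈ P) (hq : q ∈ P)
    (v : EuclideanSpace ℝ (Fin 2)) : ⟪p - q, v⟫ ≤ wext v P :=
  le_csSup (bddAbove_wext_set hfin v) ⟨p, hp, q, hq, rfl⟩

lemma abs_inner_sub_le_wext (hfin : P.Finite) (hp : p ∈ P) (hq : q ∈ P)
    (v : EuclideanSpace ℝ (Fin 2)) : |⟪p - q, v⟫| ≤ wext v P := by
  refine abs_le.2 ⟨?_, inner_sub_le_wext hfin hp hq v⟩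
  rw [neg_le, ← inner_neg_left, neg_sub]
  exact inner_sub_le_wext hfin hq hp v

lemma wext_nonneg (hfin : P.Finite) (hp : p ∈ P) (v : EuclideanSpace ℝ (Fin 2)) :
    0 ≤ wext v P := by
  simpa using inner_sub_le_wext hfin hp hp v

lemma wext_le (hp : p ∈ P) {v : EuclideanSpace ℝ (Fin 2)} {B : ℝ}
    (h : ∀ p ∈ P, ∀ q ∈ P, ⟪p - q, v⟫ ≤ B) : wext v P ≤ B :=
  csSup_le ⟨_, p, hp, p, hp, rfl⟩ fun _ ⟨p, hp, q, hq, hx⟩ ↦ hx ▸ h p hp q hq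

lemma wext_le_mul_norm (hp : p ∈ P) {D : ℝ} (hdiam : ∀ p ∈ P, ∀ q ∈ P, dist p q ≤ D)
    (v : EuclideanSpace ℝ (Fin 2)) : wext v P ≤ D * ‖v‖ :=
  wext_le hp fun p hp q hq ↦ (real_inner_le_norm _ _).trans <|
    mul_le_mul_of_nonneg_right (dist_eq_norm p q ▸ hdiam p hp q hq) (norm_nonneg v)

lemma mul_inner_sub_le_abs_mul_wext (hfin : P.Finite) (hp : p ∈ P) (hq : q ∈ P) (s : ℝ)
    (v : EuclideanSpace ℝ (Fin 2)) : s * ⟪p - q, v⟫ ≤ |s| * wext v P :=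
  calc s * ⟪p - q, v⟫ ≤ |s * ⟪p - q, v⟫| := le_abs_self _
    _ = |s| * |⟪p - q, v⟫| := abs_mul _ _
    _ ≤ |s| * wext v P :=
      mul_le_mul_of_nonneg_left (abs_inner_sub_le_wext hfin hp hq v) (abs_nonneg s)

lemma wext_le_abs_inner_mul_wext_add (hfin : P.Finite) (hp : p ∈ P)
    {γ : EuclideanSpace ℝ (Fin 2)} (hγ : ‖γ‖ = 1) (v : EuclideanSpace ℝ (Fin 2)) :
    wext v P ≤ |⟪v, γ⟫| * wext γ P + |⟪v, perp γ⟫| * wext (perp γ) P := by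
  refine wext_le hp fun p hp q hq ↦ ?_
  rw [inner_eq_inner_add_inner_perp hγ]
  exact add_le_add (mul_inner_sub_le_abs_mul_wext hfin hp hq _ γ)
    (mul_inner_sub_le_abs_mul_wext hfin hp hq _ (perp γ))

end Extent

section Diametral

variable {P : Set (EuclideanSpace ℝ (Fin 2))} {p₁ p₂ u : EuclideanSpace ℝ (Fin 2)} {D : ℝ}

lemma mul_abs_inner_le_wext (hfin : P.Finite) (hp₁ : p₁ ∈ P) (hp₂ : p₂ ∈ P) (hD : 0 ≤ D)
    (hu : p₁ - p₂ = D • u) (v : EuclideanSpace ℝ (Fin 2)) : D * |⟪u, v⟫| ≤ wext v P := by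
  have h := abs_inner_sub_le_wext hfin hp₁ hp₂ v
  rwa [hu, real_inner_smul_left, abs_mul, abs_of_nonneg hD] at h

lemma mul_wext_perp_le_two_mul_wext_mul_wext (hfin : P.Finite) (hp₁ : p₁ ∈ P) (hp₂ : p₂ ∈ P)
    (hD : 0 ≤ D) (hu : p₁ - p₂ = D • u) {γ : EuclideanSpace ℝ (Fin 2)} (hγ : ‖γ‖ = 1) :
    D * wext (perp u) P ≤ 2 * (wext γ P * wext (perp γ) P) := by
  have h := wext_le_abs_inner_mul_wext_add hfin hp₁ hγ (perp u)
  rw [inner_perp_left, abs_neg, inner_perp_perp] at h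
  have h₁ := mul_abs_inner_le_wext hfin hp₁ hp₂ hD hu (perp γ)
  have h₂ := mul_abs_inner_le_wext hfin hp₁ hp₂ hD hu γ
  calc D * wext (perp u) P
      ≤ D * (|⟪u, perp γ⟫| * wext γ P + |⟪u, γ⟫| * wext (perp γ) P) :=
        mul_le_mul_of_nonneg_left h hD
    _ = D * |⟪u, perp γ⟫| * wext γ P + D * |⟪u, γ⟫| * wext (perp γ) P := by ring
    _ ≤ wext (perp γ) P * wext γ P + wext γ P * wext (perp γ) P :=
        add_le_add (mul_le_mul_of_nonneg_right h₁ (wext_nonneg hfin hp₁ γ))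
          (mul_le_mul_of_nonneg_right h₂ (wext_nonneg hfin hp₁ (perp γ)))
    _ = 2 * (wext γ P * wext (perp γ) P) := by ring

lemma mul_wext_perp_div_two_le_sInf (hfin : P.Finite) (hp₁ : p₁ ∈ P) (hp₂ : p₂ ∈ P)
    (hD : 0 ≤ D) (hu : p₁ - p₂ = D • u) (hun : ‖u‖ = 1) :
    D * wext (perp u) P / 2 ≤ sInf {x : ℝ | ∃ γ : EuclideanSpace ℝ (Fin 2),
      ‖γ‖ = 1 ∧ x = wext γ P * wext (perp γ) P} := by
  refine le_csInf ⟨_, u, hun, rfl⟩ ?_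
  rintro _ ⟨γ, hγ, rfl⟩
  linarith [mul_wext_perp_le_two_mul_wext_mul_wext hfin hp₁ hp₂ hD hu hγ]

lemma wext_perp_le_mul_add (hfin : P.Finite) (hp₁ : p₁ ∈ P)
    (hdiam : ∀ p ∈ P, ∀ q ∈ P, dist p q ≤ D) (hun : ‖u‖ = 1) {β : EuclideanSpace ℝ (Fin 2)}
    (hβ : ‖β‖ = 1) {s : ℝ} (hs : |⟪β, perp u⟫| ≤ s) :
    wext (perp β) P ≤ s * D + wext (perp u) P := by
  have h := wext_le_abs_inner_mul_wext_add hfin hp₁ hun (perp β)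
  rw [inner_perp_left, abs_neg, inner_perp_perp] at h
  have hwu : wext u P ≤ D := by simpa [hun] using wext_le_mul_norm hp₁ hdiam u
  have hcos : |⟪β, u⟫| ≤ 1 := by simpa [hβ, hun] using abs_real_inner_le_norm β u
  calc wext (perp β) P ≤ |⟪β, perp u⟫| * wext u P + |⟪β, u⟫| * wext (perp u) P := h
    _ ≤ s * D + 1 * wext (perp u) P :=
        add_le_add (mul_le_mul hs hwu (wext_nonneg hfin hp₁ u) ((abs_nonneg _).trans hs))
          (mul_le_mul_of_nonneg_right hcos (wext_nonneg hfin hp₁ _))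
    _ = s * D + wext (perp u) P := by ring

end Diametral

lemma sin_mul_le_mul_sin {t x : ℝ} (ht : 1 ≤ t) (hx : 0 ≤ x) (htx : t * x ≤ π) :
    sin (t * x) ≤ t * sin x := by
  have ht₀ : 0 < t := one_pos.trans_le ht
  have h := strictConcaveOn_sin_Icc.concaveOn.2 (⟨le_rfl, pi_pos.le⟩ : (0 : ℝ) ∈ Set.Icc 0 π)
    (⟨by positivity, htx⟩ : t * x ∈ Set.Icc 0 π) (sub_nonneg.2 (inv_le_one_of_one_le₀ ht))
    (inv_nonneg.2 ht₀.le) (sub_add_cancel 1 t⁻¹)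
  simp only [smul_eq_mul, mul_zero, zero_add, sin_zero, inv_mul_cancel_left₀ ht₀.ne'] at h
  rwa [inv_mul_le_iff₀ ht₀] at h

lemma sin_le_mul_of_le_mul_arcsin {θ t z : ℝ} (hθ : 0 ≤ θ) (ht : 1 ≤ t) (hz₀ : 0 ≤ z)
    (hz₁ : z ≤ 1) (h : θ ≤ t * arcsin z) : sin θ ≤ t * z := by
  have hα₀ : 0 ≤ arcsin z := arcsin_nonneg.2 hz₀
  have hsin : sin (arcsin z) = z := sin_arcsin (by linarith) hz₁
  rcases le_or_gt (t * arcsin z) (π / 2) with hle | hgt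
  · calc sin θ ≤ sin (t * arcsin z) :=
          sin_le_sin_of_le_of_le_pi_div_two (by linarith [pi_pos]) hle h
      _ ≤ t * z := (sin_mul_le_mul_sin ht hα₀ (by linarith [pi_pos])).trans_eq (by rw [hsin])
  · -- Jordan's inequality `2 α / π ≤ sin α` makes `t z > 1` here.
    have hjordan := mul_le_sin hα₀ (arcsin_le_pi_div_two z)
    rw [hsin] at hjordan
    have h1 : 1 < 2 / π * (t * arcsin z) :=
      calc (1 : ℝ) = 2 / π * (π / 2) := by field_simp
        _ < 2 / π * (t * arcsin z) := mul_lt_mul_of_pos_left hgt (by positivity)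
    nlinarith [sin_le_one θ, mul_le_mul_of_nonneg_left hjordan (zero_le_one.trans ht)]

lemma abs_inner_perp_le_of_arccos_le {β u : EuclideanSpace ℝ (Fin 2)} (hβ : ‖β‖ = 1)
    (hu : ‖u‖ = 1) {t z : ℝ} (ht : 1 ≤ t) (hz₀ : 0 ≤ z) (hz₁ : z ≤ 1)
    (h : arccos |⟪β, u⟫| ≤ t * arcsin z) : |⟪β, perp u⟫| ≤ t * z := by
  have hsq := inner_sq_add_inner_perp_sq hu β
  have hsin : sin (arccos |⟪β, u⟫|) = |⟪β, perp u⟫| := by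
    rw [sin_arccos, sq_abs, ← sqrt_sq_eq_abs]
    congr 1
    rw [hβ] at hsq
    linarith
  exact hsin ▸ sin_le_mul_of_le_mul_arcsin (arccos_nonneg _) ht hz₀ hz₁ h

/-- Lemma 14 of the paper: if the orientation `β` is within angle `(2c+2)·arcsin z`
of the diametrical orientation `u` (where `z` is the aspect ratio of the diametric
box), then the bounding box aligned with `β` has area at most `(4c+6)` times the
minimum bounding-box area. -/
theorem stmt_18 (P : Set (EuclideanSpace ℝ (Fin 2))) (hfin : P.Finite)
    (D : ℝ) (hD : 0 < D)
    (p₁ p₂ : EuclideanSpace ℝ (Fin 2)) (hp₁ : p₁ ∈ P) (hp₂ : p₂ ∈ P)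
    (hdiam : ∀ p ∈ P, ∀ q ∈ P, dist p q ≤ D) (hattain : dist p₁ p₂ = D)
    (u : EuclideanSpace ℝ (Fin 2)) (hu : u = D⁻¹ • (p₁ - p₂))
    (z : ℝ) (hz : z = wext (perp u) P / D)
    (c : ℝ) (hc : 0 ≤ c)
    (β : EuclideanSpace ℝ (Fin 2)) (hβ : ‖β‖ = 1)
    (hangle : Real.arccos |⟪β, u⟫| ≤ (2 * c + 2) * Real.arcsin z) :
    wext β P * wext (perp β) P ≤
      (4 * c + 6) * sInf {x : ℝ | ∃ γ : EuclideanSpace ℝ (Fin 2),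
        ‖γ‖ = 1 ∧ x = wext γ P * wext (perp γ) P} := by
  have hDu : p₁ - p₂ = D • u := by rw [hu, smul_smul, mul_inv_cancel₀ hD.ne', one_smul]
  have hun : ‖u‖ = 1 := by
    rw [hu, norm_smul, ← dist_eq_norm, hattain, norm_inv, norm_of_nonneg hD.le,
      inv_mul_cancel₀ hD.ne']
  have hwidth : wext (perp u) P = z * D := by rw [hz, div_mul_cancel₀ _ hD.ne']
  have hz₀ : 0 ≤ z := hz ▸ div_nonneg (wext_nonneg hfin hp₁ _) hD.le
  have hz₁ : z ≤ 1 := by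
    rw [hz, div_le_one hD]
    simpa [norm_perp, hun] using wext_le_mul_norm hp₁ hdiam (perp u)
  have hsin := abs_inner_perp_le_of_arccos_le hβ hun (by linarith) hz₀ hz₁ hangle
  have hβbox := wext_perp_le_mul_add hfin hp₁ hdiam hun hβ hsin
  have hβwidth : wext β P ≤ D := by simpa [hβ] using wext_le_mul_norm hp₁ hdiam β
  calc wext β P * wext (perp β) P ≤ D * ((2 * c + 2) * z * D + z * D) :=
        mul_le_mul hβwidth (hwidth ▸ hβbox) (wext_nonneg hfin hp₁ _) hD.le
    _ = (4 * c + 6) * (D * wext (perp u) P / 2) := by rw [hwidth]; ring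
    _ ≤ _ := mul_le_mul_of_nonneg_left
        (mul_wext_perp_div_two_le_sInf hfin hp₁ hp₂ hD.le hDu hun) (by linarith)
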